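/- Let (𝔪, 𝔤, ▷, φ) be a crossed module of real Lie algebras, K = Hom(𝔤, 𝔪) ⊕ 𝔤 with bracket ⟦(A,u),(B,v)⟧ = (A∘φ∘B − B∘φ∘A + A∘ad_v − ad¹_v∘A + (·▷A(v)) + ad¹_u∘B − B∘ad_u , [u,v]_𝔤 + φ(A(v))), and let ρ : K → gl(𝔪) be the anchor ρ(A,u)(ξ) = u ▷ ξ + A(φ(ξ)). Then ρ(⟦X, Y⟧) = ρ(X)∘ρ(Y) − ρ(Y)∘ρ(X) for all X, Y ∈ K, i.e. ρ sends the bracket on K to the commutator in gl(𝔪). -/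
import Mathlib


/-- The adjoint action `ad_v(x) = ⁅v, x⁆` as a linear map. -/
def adG {g : Type*} [LieRing g] [LieAlgebra ℝ g] (v : g) : g →ₗ[ℝ] g where
  toFun x := ⁅v, x⁆
  map_add' x y := lie_add v x y
  map_smul' c x := lie_smul c v x

/-- The Dorfman bracket on `K = Hom(𝔤, 𝔪) ⊕ 𝔤` associated to a crossed module of Lie
algebras with action `a` and structure map `φ`:
`⟦(A,u),(B,v)⟧ = (A∘φ∘B − B∘φ∘A + A∘ad_v − ad¹_v∘A + (·▷A(v)) + ad¹_u∘B − B∘ad_u,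
[u,v]_𝔤 + φ(A(v)))`. -/
def cmBr {g m : Type*} [LieRing g] [LieAlgebra ℝ g] [LieRing m] [LieAlgebra ℝ m]
    (a : g →ₗ[ℝ] m →ₗ[ℝ] m) (φ : m →ₗ[ℝ] g)
    (X Y : (g →ₗ[ℝ] m) × g) : (g →ₗ[ℝ] m) × g :=
  (X.1 ∘ₗ φ ∘ₗ Y.1 - Y.1 ∘ₗ φ ∘ₗ X.1
     + X.1 ∘ₗ adG Y.2 - a Y.2 ∘ₗ X.1 + a.flip (X.1 Y.2)
     + a X.2 ∘ₗ Y.1 - Y.1 ∘ₗ adG X.2,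
   ⁅X.2, Y.2⁆ + φ (X.1 Y.2))

/-- The `𝔪`-valued pairing `⟨(A,u),(B,v)⟩_𝔪 = (1/2)(A(v) + B(u))` on `Hom(𝔤,𝔪) ⊕ 𝔤`. -/
noncomputable def cmPair {g m : Type*} [LieRing g] [LieAlgebra ℝ g]
    [LieRing m] [LieAlgebra ℝ m]
    (X Y : (g →ₗ[ℝ] m) × g) : m :=
  ((2 : ℝ)⁻¹) • (X.1 Y.2 + Y.1 X.2)

/-- The anchor `ρ(A,u)(ξ) = u ▷ ξ + A(φ(ξ))`. -/
def cmRho {g m : Type*} [LieRing g] [LieAlgebra ℝ g] [LieRing m] [LieAlgebra ℝ m]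
    (a : g →ₗ[ℝ] m →ₗ[ℝ] m) (φ : m →ₗ[ℝ] g)
    (X : (g →ₗ[ℝ] m) × g) : m →ₗ[ℝ] m :=
  a X.2 + X.1 ∘ₗ φ

/-- The coanchor `ρ⋆(ξ) = ((x ↦ x ▷ ξ), φ(ξ))`. -/
def cmRhoStar {g m : Type*} [LieRing g] [LieAlgebra ℝ g] [LieRing m] [LieAlgebra ℝ m]
    (a : g →ₗ[ℝ] m →ₗ[ℝ] m) (φ : m →ₗ[ℝ] g)
    (ξ : m) : (g →ₗ[ℝ] m) × g :=
  (a.flip ξ, φ ξ)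

/-- For a crossed module of real Lie algebras, the anchor `ρ(A,u)(ξ) = u ▷ ξ + A(φ(ξ))`
sends the bracket on `K = Hom(𝔤,𝔪) ⊕ 𝔤` to the commutator in `gl(𝔪)`. -/
theorem stmt6 {g m : Type*} [LieRing g] [LieAlgebra ℝ g] [LieRing m] [LieAlgebra ℝ m]
    (a : g →ₗ[ℝ] m →ₗ[ℝ] m) (φ : m →ₗ[ℝ] g)
    (ha_hom : ∀ x y : g, a ⁅x, y⁆ = a x ∘ₗ a y - a y ∘ₗ a x)
    (ha_der : ∀ (x : g) (ξ η : m), a x ⁅ξ, η⁆ = ⁅a x ξ, η⁆ + ⁅ξ, a x η⁆)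
    (hφ : ∀ ξ η : m, φ ⁅ξ, η⁆ = ⁅φ ξ, φ η⁆)
    (hcm1 : ∀ ξ η : m, a (φ ξ) η = ⁅ξ, η⁆)
    (hcm2 : ∀ (x : g) (ξ : m), φ (a x ξ) = ⁅x, φ ξ⁆) :
    ∀ X Y : (g →ₗ[ℝ] m) × g,
      cmRho a φ (cmBr a φ X Y)
        = cmRho a φ X ∘ₗ cmRho a φ Y - cmRho a φ Y ∘ₗ cmRho a φ X := by
  intro X Y
  ext ξ
  simp only [cmRho, cmBr, adG, LinearMap.add_apply, LinearMap.sub_apply,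
    LinearMap.comp_apply, LinearMap.coe_mk, AddHom.coe_mk, LinearMap.flip_apply,
    ha_hom, hcm1, hcm2, map_add]
  rw [← lie_skew (X.1 Y.2) ξ]
  abel
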